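/- arXiv:1805.03625 — 2 statements merged into one kernel-verified Lean document; each statement's English description precedes it below -/
import Mathlib

section
/- Every transversal matroid is base-orderable: for any two bases B₁, B₂ of a transversal matroid M, there is a bijection π : B₁ → B₂ such that for every x ∈ B₁, both (B₁ \ {x}) ∪ {π(x)} and (B₂ \ {π(x)}) ∪ {x} are bases of M. -/
/-- `X` is a partial transversal of the family `A : J → Finset S`. -/
def PartialTransversal {S J : Type*} (A : J → Finset S) (X : Finset S) : Prop :=
  ∃ f : S → J, Set.InjOn f ↑X ∧ ∀ x ∈ X, x ∈ A (f x)

/-- A collection of bases is base-orderable if for any two bases `B₁, B₂` there is a bijection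
`π : B₁ → B₂` such that for each `x ∈ B₁`, both `(B₁ \ {x}) ∪ {π x}` and `(B₂ \ {π x}) ∪ {x}`
are bases. -/
def BaseOrderable {E : Type*} [DecidableEq E] (IsBase : Finset E → Prop) : Prop :=
  ∀ B₁ B₂, IsBase B₁ → IsBase B₂ → ∃ π : E → E, Set.BijOn π ↑B₁ ↑B₂ ∧
    ∀ x ∈ B₁, IsBase (insert (π x) (B₁.erase x)) ∧ IsBase (insert x (B₂.erase (π x)))

/-!
Fix matchings `f₁` of `B₁` and `f₂` of `B₂`. From `x ∈ B₁ \ B₂` follow the alternating walk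
`x = u 0, u 1, …` in which `u (k + 1) ∈ B₂` is matched by `f₂` to the element that `f₁` assigns to
`u k ∈ B₁`, until the walk leaves `B₁`. Maximality of `B₂` guarantees that the next step exists
(otherwise `insert x B₂` would be a partial transversal), and injectivity of `f₁` makes the walk
self-avoiding, so it ends at some `y ∈ B₂ \ B₁`. Shifting the matchings along the walk shows that
`B₁ - x + y` and `B₂ - y + x` are partial transversals. Reversed, the walk is the one from `y` with
the roles of `B₁` and `B₂` swapped, so `x ↦ y` is injective; fixing `B₁ ∩ B₂` pointwise gives `π`.
The same injectivity, for an arbitrary partial transversal against a base, shows that all bases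
have the same size, so the exchanged sets are again bases.
-/

open Finset

section

variable {S J : Type*} {A : J → Finset S}

def IsMatching (A : J → Finset S) (f : S → J) (X : Finset S) : Prop :=
  Set.InjOn f ↑X ∧ ∀ x ∈ X, x ∈ A (f x)

def IsTransversalBase (A : J → Finset S) (B : Finset S) : Prop :=
  PartialTransversal A B ∧ ∀ B' : Finset S, PartialTransversal A B' → B ⊆ B' → B = B'

namespace IsMatching

variable {f g : S → J} {X Y : Finset S}

theorem mono (hf : IsMatching A f Y) (h : X ⊆ Y) : IsMatching A f X :=
  ⟨hf.1.mono (by exact_mod_cast h), fun x hx => hf.2 x (h hx)⟩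

theorem partialTransversal_union [DecidableEq S] (hf : IsMatching A f X) (hg : IsMatching A g Y)
    (hfg : ∀ x ∈ X, ∀ y ∈ Y, f x ≠ g y) : PartialTransversal A (X ∪ Y) := by
  refine ⟨fun s => if s ∈ X then f s else g s, fun a ha b hb hab => ?_, fun s hs => ?_⟩
  · simp only [coe_union, Set.mem_union, mem_coe] at ha hb
    by_cases haX : a ∈ X <;> by_cases hbX : b ∈ X <;> simp only [haX, hbX, if_true, if_false] at hab
    · exact hf.1 haX hbX hab
    · exact absurd hab (hfg a haX b (hb.resolve_left hbX))
    · exact absurd hab.symm (hfg b hbX a (ha.resolve_left haX))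
    · exact hg.1 (ha.resolve_left haX) (hb.resolve_left hbX) hab
  · by_cases hsX : s ∈ X
    · simpa [hsX] using hf.2 s hsX
    · simpa [hsX] using hg.2 s ((mem_union.1 hs).resolve_left hsX)

theorem partialTransversal_sdiff_union [DecidableEq S] {Q P : Finset S}
    (hf : IsMatching A f X) (hg : IsMatching A g Y) (hQ : Q ⊆ X) (hP : P ⊆ Y)
    (hPQ : ∀ p ∈ P, ∃ q ∈ Q, g p = f q) : PartialTransversal A (X \ Q ∪ P) := by
  refine (hf.mono sdiff_subset).partialTransversal_union (hg.mono hP) fun x hx p hp hxp => ?_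
  obtain ⟨q, hq, hpq⟩ := hPQ p hp
  have hxq : x = q := hf.1 (mem_sdiff.1 hx).1 (hQ hq) (hxp.trans hpq)
  exact (mem_sdiff.1 hx).2 (hxq ▸ hq)

end IsMatching

theorem PartialTransversal.mono {X Y : Finset S} (hY : PartialTransversal A Y) (h : X ⊆ Y) :
    PartialTransversal A X :=
  let ⟨f, hf⟩ := hY; ⟨f, IsMatching.mono hf h⟩

def IsAltWalk (B C : Finset S) (f g : S → J) (u : ℕ → S) (n : ℕ) : Prop :=
  u 0 ∉ C ∧ ∀ k < n, u k ∈ B ∧ u (k + 1) ∈ C ∧ f (u k) = g (u (k + 1))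

namespace IsAltWalk

variable {B C : Finset S} {f g : S → J} {u v : ℕ → S} {m n : ℕ}

theorem ne_of_lt (hf : Set.InjOn f ↑B) (hu : IsAltWalk B C f g u n) :
    ∀ {a b : ℕ}, a < b → b ≤ n → u a ≠ u b
  | 0, b, hab, hbn, h => by
    have hbC := (hu.2 (b - 1) (by omega)).2.1
    rw [Nat.sub_add_cancel hab] at hbC
    exact hu.1 (h ▸ hbC)
  | a + 1, b, hab, hbn, h => by
    obtain ⟨haB, -, ha⟩ := hu.2 a (by omega)
    obtain ⟨hbB, -, hb⟩ := hu.2 (b - 1) (by omega)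
    rw [Nat.sub_add_cancel (by omega : 1 ≤ b)] at hb
    exact hu.ne_of_lt hf (by omega : a < b - 1) (by omega) (hf haB hbB (by rw [ha, hb, h]))

theorem eq_of_le (hg : Set.InjOn g ↑C) (hu : IsAltWalk B C f g u m) (hv : IsAltWalk B C f g v n)
    (h₀ : u 0 = v 0) : ∀ k, k ≤ m → k ≤ n → u k = v k
  | 0, _, _ => h₀
  | k + 1, hm, hn => by
    obtain ⟨-, huC, hu'⟩ := hu.2 k (by omega)
    obtain ⟨-, hvC, hv'⟩ := hv.2 k (by omega)
    exact hg huC hvC (by rw [← hu', ← hv', eq_of_le hg hu hv h₀ k (by omega) (by omega)])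

theorem exists_next [DecidableEq S]
    (hf : IsMatching A f B) (hg : IsMatching A g C) (hC : IsTransversalBase A C)
    (hu : IsAltWalk B C f g u n) (hn : u n ∈ B) : ∃ y ∈ C, f (u n) = g y := by
  by_contra! hstuck
  set Q := (range (n + 1)).image u
  set P := (range n).image fun k => u (k + 1)
  have hQ : Q ⊆ B := by
    simp only [Q, image_subset_iff, mem_range]
    intro k hk
    rcases Nat.lt_succ_iff_lt_or_eq.1 hk with hk | rfl
    exacts [(hu.2 k hk).1, hn]
  have hT : PartialTransversal A (Q ∪ C \ P) := by
    refine (hf.mono hQ).partialTransversal_union (hg.mono sdiff_subset) ?_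
    simp only [Q, P, mem_image, mem_range, mem_sdiff, forall_exists_index, and_imp]
    rintro _ k hk rfl c hcC hcP hkc
    rcases Nat.lt_succ_iff_lt_or_eq.1 hk with hk | rfl
    · obtain ⟨-, hC', hstep⟩ := hu.2 k hk
      exact hcP ⟨k, hk, hg.1 hC' hcC (hstep ▸ hkc)⟩
    · exact hstuck c hcC hkc
  have hsub : insert (u 0) C ⊆ Q ∪ C \ P := by
    intro c hc
    simp only [Q, P, mem_insert, mem_union, mem_image, mem_range, mem_sdiff] at hc ⊢
    grind
  have hCeq := hC.2 _ (hT.mono hsub) (subset_insert _ _)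
  exact hu.1 (hCeq ▸ mem_insert_self _ _)

end IsAltWalk

def AltLinked (B C : Finset S) (f g : S → J) (x y : S) : Prop :=
  ∃ u m, 0 < m ∧ IsAltWalk B C f g u m ∧ u m ∉ B ∧ u 0 = x ∧ u m = y

namespace AltLinked

variable {B C : Finset S} {f g : S → J} {x x' y y' : S}

theorem symm (h : AltLinked B C f g x y) : AltLinked C B g f y x := by
  obtain ⟨u, m, hm, hu, huB, rfl, rfl⟩ := h
  refine ⟨fun k => u (m - k), m, hm, ⟨by simpa using huB, fun k hk => ?_⟩, by simpa using hu.1,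
    by simp, by simp⟩
  obtain ⟨hB, hC, hstep⟩ := hu.2 (m - (k + 1)) (by omega)
  rw [show m - (k + 1) + 1 = m - k by omega] at hC hstep
  exact ⟨hC, hB, hstep.symm⟩

theorem mem_left (h : AltLinked B C f g x y) : x ∈ B := by
  obtain ⟨u, m, hm, hu, -, rfl, -⟩ := h
  exact (hu.2 0 hm).1

theorem notMem_right (h : AltLinked B C f g x y) : y ∉ B := by
  obtain ⟨u, m, -, -, huB, -, rfl⟩ := h
  exact huB

theorem right_eq (hg : Set.InjOn g ↑C) (h : AltLinked B C f g x y) (h' : AltLinked B C f g x y') :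
    y = y' := by
  obtain ⟨u, m, -, hu, huB, rfl, rfl⟩ := h
  obtain ⟨v, n, -, hv, hvB, hv₀, rfl⟩ := h'
  have huv := hu.eq_of_le hg hv hv₀.symm
  rcases lt_trichotomy m n with hmn | rfl | hmn
  · exact absurd ((huv m le_rfl hmn.le).symm ▸ (hv.2 m hmn).1) huB
  · exact huv m le_rfl le_rfl
  · exact absurd ((huv n hmn.le le_rfl) ▸ (hu.2 n hmn).1) hvB

theorem left_eq (hf : Set.InjOn f ↑B) (h : AltLinked B C f g x y) (h' : AltLinked B C f g x' y) :
    x = x' :=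
  h.symm.right_eq hf h'.symm

variable [DecidableEq S]

theorem partialTransversal_exchange (hf : IsMatching A f B) (hg : IsMatching A g C)
    (h : AltLinked B C f g x y) : PartialTransversal A (insert y (B.erase x)) := by
  obtain ⟨u, m, hm, hu, huB, rfl, rfl⟩ := h
  have hT := hf.partialTransversal_sdiff_union hg (Q := (range m).image u)
    (P := (range m).image fun k => u (k + 1))
    (by simpa [image_subset_iff] using fun k hk => (hu.2 k hk).1)
    (by simpa [image_subset_iff] using fun k hk => (hu.2 k hk).2.1)
    (by simpa using fun k hk => ⟨k, hk, (hu.2 k hk).2.2.symm⟩)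
  refine hT.mono fun b hb => ?_
  simp only [mem_insert, mem_erase, mem_union, mem_sdiff, mem_image, mem_range] at hb ⊢
  rcases hb with rfl | ⟨hb0, hbB⟩
  · exact Or.inr ⟨m - 1, by omega, by rw [Nat.sub_add_cancel hm]⟩
  · by_cases hbQ : ∃ k < m, u k = b
    · obtain ⟨k, hk, rfl⟩ := hbQ
      have hk0 : k ≠ 0 := by rintro rfl; exact hb0 rfl
      exact Or.inr ⟨k - 1, by omega, by rw [Nat.sub_add_cancel (Nat.one_le_iff_ne_zero.2 hk0)]⟩
    · exact Or.inl ⟨hbB, hbQ⟩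

end AltLinked

theorem exists_altLinked [DecidableEq S] {B C : Finset S} {f g : S → J} {x : S}
    (hf : IsMatching A f B) (hg : IsMatching A g C) (hC : IsTransversalBase A C)
    (hxB : x ∈ B) (hxC : x ∉ C) : ∃ y, AltLinked B C f g x y := by
  have hpartner : ∀ z, ∃ y, (∃ y ∈ C, f z = g y) → y ∈ C ∧ f z = g y := fun z =>
    (em _).elim (fun ⟨y, hy⟩ => ⟨y, fun _ => hy⟩) fun h => ⟨z, fun h' => absurd h' h⟩
  choose next hnext using hpartner
  set u : ℕ → S := fun k => next^[k] x
  have hwalk : ∀ n, (∀ k < n, u k ∈ B) → IsAltWalk B C f g u n := by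
    intro n
    induction n with
    | zero => exact fun _ => ⟨hxC, by simp⟩
    | succ n ih =>
      intro hB
      have hw := ih fun k hk => hB k (by omega)
      have hun : u (n + 1) = next (u n) := Function.iterate_succ_apply' next n x
      refine ⟨hw.1, fun k hk => ?_⟩
      rcases Nat.lt_succ_iff_lt_or_eq.1 hk with hk | rfl
      · exact hw.2 k hk
      · exact ⟨hB k (by omega), hun ▸ hnext _ (hw.exists_next hf hg hC (hB k (by omega)))⟩
  have hexit : ∃ m, u m ∉ B := by
    by_contra! hall
    have hinj : u.Injective :=
      .of_lt_imp_ne fun a b hab => (hwalk b fun k _ => hall k).ne_of_lt hf.1 hab le_rfl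
    exact Set.infinite_of_injective_forall_mem hinj hall B.finite_toSet
  refine ⟨u (Nat.find hexit), u, Nat.find hexit, ?_, hwalk _ fun k hk => ?_, Nat.find_spec hexit,
    rfl, rfl⟩
  · exact Nat.pos_of_ne_zero fun h => (h ▸ Nat.find_spec hexit) hxB
  · exact not_not.1 (Nat.find_min hexit hk)

theorem exists_forall_altLinked [DecidableEq S] {B C : Finset S} {f g : S → J}
    (hf : IsMatching A f B) (hg : IsMatching A g C) (hC : IsTransversalBase A C) :
    ∃ π : S → S, ∀ x ∈ B \ C, AltLinked B C f g x (π x) := by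
  have hlinked : ∀ x, ∃ y, x ∈ B \ C → AltLinked B C f g x y := fun x =>
    (em (x ∈ B \ C)).elim
      (fun hx => (exists_altLinked hf hg hC (mem_sdiff.1 hx).1 (mem_sdiff.1 hx).2).imp
        fun _ h _ => h)
      fun hx => ⟨x, fun h => absurd h hx⟩
  choose π hπ using hlinked
  exact ⟨π, hπ⟩

namespace IsTransversalBase

variable [DecidableEq S] {B C X : Finset S}

theorem card_le (hC : IsTransversalBase A C) (hX : PartialTransversal A X) : #X ≤ #C := by
  obtain ⟨f, hf⟩ := hX
  obtain ⟨g, hg⟩ := hC.1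
  obtain ⟨π, hπ⟩ := exists_forall_altLinked hf hg hC
  rw [← card_sdiff_le_card_sdiff_iff]
  refine card_le_card_of_injOn π (fun x hx => ?_) fun a ha b hb hab => ?_
  · exact mem_sdiff.2 ⟨(hπ x hx).symm.mem_left, (hπ x hx).notMem_right⟩
  · exact (hπ a ha).left_eq hf.1 (hab ▸ hπ b hb)

theorem of_card_le (hB : IsTransversalBase A B) (hX : PartialTransversal A X) (h : #B ≤ #X) :
    IsTransversalBase A X :=
  ⟨hX, fun _ hX' hsub => eq_of_subset_of_card_le hsub ((hB.card_le hX').trans h)⟩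

end IsTransversalBase

theorem AltLinked.isTransversalBase_exchange [DecidableEq S] {B C : Finset S} {f g : S → J}
    {x y : S} (hf : IsMatching A f B) (hg : IsMatching A g C) (hB : IsTransversalBase A B)
    (h : AltLinked B C f g x y) : IsTransversalBase A (insert y (B.erase x)) := by
  refine hB.of_card_le (h.partialTransversal_exchange hf hg) ?_
  rw [card_insert_of_notMem fun hy => h.notMem_right (mem_of_mem_erase hy),
    card_erase_add_one h.mem_left]

theorem exists_bijOn_altLinked [DecidableEq S] {B₁ B₂ : Finset S} {f₁ f₂ : S → J}
    (hf₁ : IsMatching A f₁ B₁) (hf₂ : IsMatching A f₂ B₂) (hB₁ : IsTransversalBase A B₁)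
    (hB₂ : IsTransversalBase A B₂) :
    ∃ π : S → S, Set.BijOn π ↑B₁ ↑B₂ ∧
      ∀ x ∈ B₁, x ∈ B₂ ∧ π x = x ∨ AltLinked B₁ B₂ f₁ f₂ x (π x) := by
  obtain ⟨σ, hσ⟩ := exists_forall_altLinked hf₁ hf₂ hB₂
  obtain ⟨π, hπ⟩ : ∃ π : S → S, ∀ x ∈ B₁, x ∈ B₂ ∧ π x = x ∨ AltLinked B₁ B₂ f₁ f₂ x (π x) := by
    refine ⟨fun x => if x ∈ B₂ then x else σ x, fun x hx => ?_⟩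
    by_cases hx₂ : x ∈ B₂
    · exact Or.inl ⟨hx₂, if_pos hx₂⟩
    · exact Or.inr (by simpa [hx₂] using hσ x (mem_sdiff.2 ⟨hx, hx₂⟩))
  have hmaps : Set.MapsTo π ↑B₁ ↑B₂ := fun x hx => by
    rcases hπ x hx with ⟨hx₂, h⟩ | h
    · rwa [mem_coe, h]
    · exact h.symm.mem_left
  have hinj : Set.InjOn π ↑B₁ := fun a ha b hb hab => by
    rcases hπ a ha with ⟨-, ha'⟩ | ha' <;> rcases hπ b hb with ⟨-, hb'⟩ | hb'
    · exact ha'.symm.trans (hab.trans hb')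
    · exact absurd (by rwa [← hab, ha']) hb'.notMem_right
    · exact absurd (by rwa [hab, hb']) ha'.notMem_right
    · exact ha'.left_eq hf₁.1 (hab ▸ hb')
  exact ⟨π, ⟨hmaps, hinj, surjOn_of_injOn_of_card_le _ hmaps hinj (hB₁.card_le hB₂.1)⟩, hπ⟩

end

theorem stmt7_general {S J : Type*} [DecidableEq S] (A : J → Finset S) :
    BaseOrderable (fun B : Finset S => PartialTransversal A B ∧
      ∀ B' : Finset S, PartialTransversal A B' → B ⊆ B' → B = B') := by
  intro B₁ B₂ hB₁ hB₂
  obtain ⟨f₁, hf₁⟩ := hB₁.1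
  obtain ⟨f₂, hf₂⟩ := hB₂.1
  obtain ⟨π, hπ, hlinked⟩ := exists_bijOn_altLinked hf₁ hf₂ hB₁ hB₂
  refine ⟨π, hπ, fun x hx => ?_⟩
  rcases hlinked x hx with ⟨hx₂, hπx⟩ | h
  · rw [hπx, insert_erase hx, insert_erase hx₂]
    exact ⟨hB₁, hB₂⟩
  · exact ⟨h.isTransversalBase_exchange hf₁ hf₂ hB₁, h.symm.isTransversalBase_exchange hf₂ hf₁ hB₂⟩

/-- Every transversal matroid (the matroid on `S` whose independent sets are the
partial transversals of a finite family of subsets of `S`, whose bases are the maximal partial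
transversals) is base-orderable. -/
theorem stmt7 {S J : Type*} [Fintype S] [Fintype J] [DecidableEq S] (A : J → Finset S) :
    BaseOrderable (fun B : Finset S => PartialTransversal A B ∧
      ∀ B' : Finset S, PartialTransversal A B' → B ⊆ B' → B = B') :=
  stmt7_general A
end

section
/- Every gammoid is base-orderable. -/
/-- `Linked Adj B X` : `X` can be linked into `B` in the directed graph with adjacency `Adj`
by pairwise vertex-disjoint directed paths. -/
def Linked {V : Type*} (Adj : V → V → Prop) (B : Set V) (X : Set V) : Prop :=
  ∃ P : X → List V,
    (∀ x : X, (P x).Chain' Adj ∧ (P x).Nodup ∧ (P x).head? = some x.1 ∧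
      ∃ y ∈ B, (P x).getLast? = some y) ∧
    ∀ x x' : V, ∀ hx : x ∈ X, ∀ hx' : x' ∈ X, x ≠ x' →
      ∀ v ∈ P ⟨x, hx⟩, v ∉ P ⟨x', hx'⟩

/-!
Represent a linkage of `X` into `B₀` by the partial map `f` sending each vertex of a path to its
successor. Given maximal linked sets `X`, `Y` with such maps `f`, `h` and `x ∈ X \ Y`, walk from
`x` forward along `f`-paths and backward along `h`-paths. Both directions of a step are unique,
so the walk is a simple path and runs into a dead end. Using `f` on the walk and `h` elsewhere
links `Y` with `x` added and the vertex `y` where the walk stops removed; using `h` on the walk and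
`f` elsewhere links `X - x + y`. (If the walk stops off `Y`, then `Y + x` is linked, contradicting
maximality.) Walks from distinct `x` are disjoint, so `x ↦ y` is an injection `X \ Y → Y \ X`.
Injections in both directions force `|X| = |Y|`, so it is a bijection, and the exchanged sets,
linked and of full size, are bases.
-/

namespace Relation.ReflTransGen
variable {α : Type*} {r : α → α → Prop} {a b c : α}

theorem total_of_left_unique (U : Relator.LeftUnique r) (ac : ReflTransGen r a c)
    (bc : ReflTransGen r b c) : ReflTransGen r a b ∨ ReflTransGen r b a := by
  rw [← reflTransGen_swap] at ac bc ⊢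
  rw [← reflTransGen_swap (r := r)]
  exact (total_of_right_unique (r := Function.swap r) (fun _ _ _ h₁ h₂ ↦ U h₁ h₂) ac bc).symm

theorem eq_of_left_unique (U : Relator.LeftUnique r) (ha : ∀ d, ¬ r d a) (hb : ∀ d, ¬ r d b)
    (ac : ReflTransGen r a c) (bc : ReflTransGen r b c) : a = b := by
  rcases total_of_left_unique U ac bc with h | h
  · rcases h.cases_tail with rfl | ⟨d, -, hd⟩
    · rfl
    · exact absurd hd (hb d)
  · rcases h.cases_tail with rfl | ⟨d, -, hd⟩
    · rfl
    · exact absurd hd (ha d)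

theorem exists_forall_not_rel [Finite α] (U : Relator.LeftUnique r) (ha : ∀ d, ¬ r d a) :
    ∃ b, ReflTransGen r a b ∧ ∀ c, ¬ r b c := by
  by_contra! hcon
  have hsucc : ∀ b : {b // ReflTransGen r a b}, ∃ c : {b // ReflTransGen r a b}, r b c :=
    fun b ↦ let ⟨c, hc⟩ := hcon b b.2; ⟨⟨c, b.2.tail hc⟩, hc⟩
  choose s hs using hsucc
  have hinj : Function.Injective s := fun b b' hbb' ↦ Subtype.ext (U (hs b) (hbb' ▸ hs b'))
  obtain ⟨b, hb⟩ := Finite.surjective_of_injective hinj ⟨a, refl⟩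
  exact ha b (by simpa [hb] using hs b)

end Relation.ReflTransGen

namespace List

section

variable {α : Type*} {r : α → α → Prop} {a : α}

theorem nodup_of_isChain_cons (U : Relator.LeftUnique r) (ha : ∀ d, ¬ r d a) {l : List α}
    (hl : IsChain r (a :: l)) : (a :: l).Nodup := by
  induction l using List.reverseRecOn with
  | nil => exact nodup_singleton a
  | append_singleton l c ih =>
    rw [← cons_append, isChain_append] at hl
    obtain ⟨hl, -, hlast⟩ := hl
    have hnd := ih hl
    rw [← cons_append]
    generalize hL : a :: l = L at hl hlast hnd
    rw [nodup_append_comm, singleton_append, nodup_cons]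
    refine ⟨fun hc ↦ ?_, hnd⟩
    obtain ⟨s, t, rfl⟩ := append_of_mem hc
    rcases eq_nil_or_concat' s with rfl | ⟨s, p, rfl⟩
    · obtain ⟨rfl, -⟩ := cons_eq_cons.1 hL
      exact ha _ (by simpa [getLast?_eq_some_getLast] using hlast)
    · have hp : r p c := by
        rw [append_assoc, singleton_append, isChain_append_cons_cons] at hl
        exact hl.2.1
      have hrc : r ((c :: t).getLast (cons_ne_nil c t)) c := by
        simpa [getLast?_eq_some_getLast, getLast?_append] using hlast
      exact disjoint_of_nodup_append hnd (by simp) (U hp hrc ▸ getLast_mem _)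

end

section

variable {α : Type*} [DecidableEq α] {l : List α} {v u : α}

def nextAfter? : List α → α → Option α
  | [], _ => none
  | a :: l, v => if a = v then l.head? else l.nextAfter? v

theorem mem_of_nextAfter?_eq_some (h : l.nextAfter? v = some u) : v ∈ l := by
  induction l with
  | nil => simp [nextAfter?] at h
  | cons a l ih => by_cases hav : a = v <;> simp_all [nextAfter?]

theorem mem_tail_of_nextAfter?_eq_some (h : l.nextAfter? v = some u) : u ∈ l.tail := by
  induction l with
  | nil => simp [nextAfter?] at h
  | cons a l ih =>
    by_cases hav : a = v
    · simp_all [nextAfter?, mem_of_mem_head?]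
    · simp_all [nextAfter?, mem_of_mem_tail]

theorem IsChain.rel_of_nextAfter?_eq_some {R : α → α → Prop} (hl : IsChain R l)
    (h : l.nextAfter? v = some u) : R v u := by
  induction l with
  | nil => simp [nextAfter?] at h
  | cons a l ih =>
    by_cases hav : a = v
    · subst hav
      cases l with
      | nil => simp [nextAfter?] at h
      | cons b l => simp_all [nextAfter?]
    · simp only [nextAfter?, if_neg hav] at h
      exact ih hl.tail h

theorem getLast?_eq_of_nextAfter?_eq_none (hv : v ∈ l) (h : l.nextAfter? v = none) :
    l.getLast? = some v := by
  induction l with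
  | nil => simp at hv
  | cons a l ih =>
    by_cases hav : a = v
    · subst hav; simp_all [nextAfter?]
    · cases l with
      | nil => simp_all
      | cons b l => simp_all [nextAfter?, Ne.symm hav]

theorem mem_of_nextAfter?_eq_some_right (h : l.nextAfter? v = some u) : u ∈ l :=
  mem_of_mem_tail (mem_tail_of_nextAfter?_eq_some h)

theorem head?_ne_of_nextAfter?_eq_some (hl : l.Nodup) (h : l.nextAfter? v = some u) :
    l.head? ≠ some u := by
  have hu := mem_tail_of_nextAfter?_eq_some h
  cases l with
  | nil => simp at hu
  | cons a l =>
    rintro ⟨⟩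
    exact (nodup_cons.1 hl).1 hu

theorem eq_of_nextAfter?_eq_some (hl : l.Nodup) {v' : α} (h : l.nextAfter? v = some u)
    (h' : l.nextAfter? v' = some u) : v = v' := by
  induction l with
  | nil => simp [nextAfter?] at h
  | cons a l ih =>
    have hl' := (nodup_cons.1 hl).2
    by_cases hav : a = v <;> by_cases hav' : a = v'
    · exact hav ▸ hav'
    · rw [nextAfter?, if_pos hav] at h
      rw [nextAfter?, if_neg hav'] at h'
      exact (head?_ne_of_nextAfter?_eq_some hl' h' h).elim
    · rw [nextAfter?, if_neg hav] at h
      rw [nextAfter?, if_pos hav'] at h'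
      exact (head?_ne_of_nextAfter?_eq_some hl' h h').elim
    · rw [nextAfter?, if_neg hav] at h
      rw [nextAfter?, if_neg hav'] at h'
      exact ih hl' h h'

theorem exists_nextAfter?_eq_some (hl : l.Nodup) (hv : v ∈ l) (hh : l.head? ≠ some v) :
    ∃ u, l.nextAfter? u = some v := by
  induction l with
  | nil => simp at hv
  | cons a l ih =>
    have hav : a ≠ v := by rintro rfl; simp at hh
    by_cases hl' : l.head? = some v
    · exact ⟨a, by simp [nextAfter?, hl']⟩
    · obtain ⟨u, hu⟩ := ih (nodup_cons.1 hl).2 (by simpa [Ne.symm hav] using hv) hl'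
      have hau : a ≠ u := by
        rintro rfl
        exact (nodup_cons.1 hl).1 (mem_of_nextAfter?_eq_some hu)
      exact ⟨u, by simp [nextAfter?, hau, hu]⟩

end

end List

section BaseOrderable

open Finset

variable {E : Type*} [DecidableEq E]

theorem baseOrderable_of_bijOn_sdiff {IsBase : Finset E → Prop}
    (h : ∀ B₁ B₂, IsBase B₁ → IsBase B₂ → ∃ σ : E → E, Set.BijOn σ ↑(B₁ \ B₂) ↑(B₂ \ B₁) ∧
      ∀ x ∈ B₁ \ B₂, IsBase (insert (σ x) (B₁.erase x)) ∧ IsBase (insert x (B₂.erase (σ x)))) :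
    BaseOrderable IsBase := by
  classical
  intro B₁ B₂ hB₁ hB₂
  obtain ⟨σ, hσ, hexch⟩ := h B₁ B₂ hB₁ hB₂
  set π := (↑(B₁ \ B₂) : Set E).piecewise σ id
  have hπ : ∀ x ∈ B₁ ∩ B₂, π x = x := fun x hx ↦
    Set.piecewise_eq_of_notMem _ _ _ (by simp_all)
  have hdiff : Set.BijOn π ↑(B₁ \ B₂) ↑(B₂ \ B₁) := hσ.congr (Set.piecewise_eqOn _ σ id).symm
  have hinter : Set.BijOn π ↑(B₁ ∩ B₂) ↑(B₁ ∩ B₂) :=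
    (Set.bijOn_id _).congr fun x hx ↦ (hπ x hx).symm
  have hinj : Set.InjOn π (↑(B₁ \ B₂) ∪ ↑(B₁ ∩ B₂)) := by
    refine (Set.injOn_union (disjoint_coe.2 (disjoint_sdiff_inter B₁ B₂))).2
      ⟨hdiff.injOn, hinter.injOn, fun x hx y hy hxy ↦ ?_⟩
    have := hdiff.mapsTo hx
    rw [hxy, hπ y hy] at this
    simp_all
  refine ⟨π, ?_, fun x hx ↦ ?_⟩
  · have := hdiff.union hinter hinj
    rwa [← coe_union, ← coe_union, sdiff_union_inter, inter_comm, sdiff_union_inter] at this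
  · by_cases hx' : x ∈ B₁ \ B₂
    · simpa [π, Set.piecewise_eq_of_mem _ _ _ (mem_coe.2 hx')] using hexch x hx'
    · have hx₂ : x ∈ B₂ := by simp_all
      rw [hπ x (mem_inter.2 ⟨hx, hx₂⟩), insert_erase hx, insert_erase hx₂]
      exact ⟨hB₁, hB₂⟩

variable [Finite E] {Ind : Finset E → Prop}

theorem baseOrderable_maximal_of_injOn_sdiff
    (h : ∀ X Y, Maximal Ind X → Maximal Ind Y → ∃ σ : E → E, Set.InjOn σ ↑(X \ Y) ∧
      ∀ x ∈ X \ Y, σ x ∈ Y \ X ∧ Ind (insert (σ x) (X.erase x)) ∧ Ind (insert x (Y.erase (σ x)))) :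
    BaseOrderable (Maximal Ind) := by
  have hle : ∀ X Y, Maximal Ind X → Maximal Ind Y → #(X \ Y) ≤ #(Y \ X) := fun X Y hX hY ↦
    let ⟨σ, hinj, hσ⟩ := h X Y hX hY
    card_le_card_of_injOn σ (fun x hx ↦ (hσ x hx).1) hinj
  have hcard : ∀ X Y, Maximal Ind X → Maximal Ind Y → #X = #Y := fun X Y hX hY ↦ by
    have := hle X Y hX hY
    have := hle Y X hY hX
    have := card_sdiff_add_card_inter X Y
    have := card_sdiff_add_card_inter Y X
    rw [inter_comm] at this
    omega
  have hmax : ∀ X T, Maximal Ind X → Ind T → #T = #X → Maximal Ind T := fun X T hX hT hTX ↦ by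
    obtain ⟨B, hTB, hB⟩ := Finite.exists_le_maximal hT
    rwa [eq_of_subset_of_card_le hTB (by rw [hTX, hcard B X hB hX])]
  refine baseOrderable_of_bijOn_sdiff fun X Y hX hY ↦ ?_
  obtain ⟨σ, hinj, hσ⟩ := h X Y hX hY
  refine ⟨σ, ⟨fun x hx ↦ (hσ x hx).1, hinj, ?_⟩, fun x hx ↦ ⟨?_, ?_⟩⟩
  · exact surjOn_of_injOn_of_card_le σ (fun x hx ↦ (hσ x hx).1) hinj (hle Y X hY hX)
  · have hy := mem_sdiff.1 (hσ x hx).1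
    refine hmax X _ hX (hσ x hx).2.1 ?_
    rw [card_insert_of_notMem (fun h ↦ hy.2 (mem_of_mem_erase h)),
      card_erase_add_one (mem_sdiff.1 hx).1]
  · have hy := mem_sdiff.1 (hσ x hx).1
    refine hmax Y _ hY (hσ x hx).2.2 ?_
    rw [card_insert_of_notMem (fun h ↦ (mem_sdiff.1 hx).2 (mem_of_mem_erase h)),
      card_erase_add_one hy.1]

end BaseOrderable

section LinkageMap

variable {V : Type*} {Adj : V → V → Prop} {B₀ : Set V}

theorem linked_of_succ [Finite V] {W Z : Set V} (g : V → Option V)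
    (adj : ∀ ⦃v u⦄, g v = some u → Adj v u)
    (inj : ∀ ⦃v v' u⦄, g v = some u → g v' = some u → v = v')
    (mapsTo : ∀ ⦃v u⦄, v ∈ W → g v = some u → u ∈ W)
    (mem_of_eq_none : ∀ ⦃v⦄, v ∈ W → g v = none → v ∈ B₀)
    (hZW : Z ⊆ W) (hZ : ∀ z ∈ Z, ∀ v, g v ≠ some z) : Linked Adj B₀ Z := by
  have hU : Relator.LeftUnique (fun v u ↦ g v = some u) := inj
  have hpath : ∀ z : Z, ∃ l, (z.1 :: l).IsChain (fun v u ↦ g v = some u) ∧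
      ∃ t ∈ B₀, (z.1 :: l).getLast? = some t := fun ⟨z, hz⟩ ↦ by
    obtain ⟨t, hzt, ht⟩ := Relation.ReflTransGen.exists_forall_not_rel hU (hZ z hz)
    have htW : t ∈ W := by
      clear ht
      induction hzt with
      | refl => exact hZW hz
      | tail _ hstep ih => exact mapsTo ih hstep
    obtain ⟨l, hl, hlast⟩ := List.exists_isChain_cons_of_relationReflTransGen hzt
    refine ⟨l, hl, t, mem_of_eq_none htW (Option.eq_none_iff_forall_ne_some.2 ht), ?_⟩
    rw [List.getLast?_eq_some_getLast (List.cons_ne_nil _ _), hlast]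
  choose l hl hlast using hpath
  have hreach : ∀ z : Z, ∀ v ∈ z.1 :: l z, Relation.ReflTransGen (fun v u ↦ g v = some u) z v :=
    fun z ↦ (hl z).induction _ _ (fun _ _ h h' ↦ h'.tail h) fun _ ↦ .refl
  refine ⟨fun z ↦ z.1 :: l z, fun z ↦ ⟨(hl z).imp adj,
    List.nodup_of_isChain_cons hU (hZ z z.2) (hl z), rfl, hlast z⟩, ?_⟩
  intro z z' hz hz' hne v hv hv'
  exact hne (Relation.ReflTransGen.eq_of_left_unique hU (hZ z hz) (hZ z' hz')
    (hreach _ v hv) (hreach _ v hv'))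

/-- `f v` is the successor of `v` on the path of the linkage through `v`, and `S` is the set of
vertices on these paths. -/
structure IsLinkageMap (Adj : V → V → Prop) (B₀ X : Set V) (f : V → Option V) (S : Set V) :
    Prop where
  adj ⦃v u : V⦄ : f v = some u → Adj v u
  inj ⦃v v' u : V⦄ : f v = some u → f v' = some u → v = v'
  mem_left ⦃v u : V⦄ : f v = some u → v ∈ S
  mem_right ⦃v u : V⦄ : f v = some u → u ∈ S
  subset : X ⊆ S
  mem_of_eq_none ⦃v : V⦄ : v ∈ S → f v = none → v ∈ B₀
  ne_some ⦃x : V⦄ : x ∈ X → ∀ v, f v ≠ some x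
  mem_or_exists ⦃v : V⦄ : v ∈ S → v ∈ X ∨ ∃ u, f u = some v

theorem Linked.exists_isLinkageMap {X : Set V} (hL : Linked Adj B₀ X) :
    ∃ f S, IsLinkageMap Adj B₀ X f S := by
  classical
  obtain ⟨P, hP, hdisj⟩ := hL
  have huniq : ∀ {a b : X} {v : V}, v ∈ P a → v ∈ P b → a = b := fun {a b} v ha hb ↦ by
    by_contra hne
    exact hdisj a b a.2 b.2 (fun h ↦ hne (Subtype.ext h)) v ha hb
  have hhead : ∀ a : X, (P a).head? = some a.1 := fun a ↦ (hP a).2.2.1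
  have hself : ∀ a : X, a.1 ∈ P a := fun a ↦ List.mem_of_mem_head? (hhead a)
  let f : V → Option V := fun v ↦ if h : ∃ a, v ∈ P a then (P h.choose).nextAfter? v else none
  have hf : ∀ {a : X} {v : V}, v ∈ P a → f v = (P a).nextAfter? v := fun {a v} hv ↦ by
    have h : ∃ a, v ∈ P a := ⟨a, hv⟩
    simp only [f, dif_pos h, huniq h.choose_spec hv]
  have hf' : ∀ {v u : V}, f v = some u → ∃ a, (P a).nextAfter? v = some u := fun {v u} hvu ↦ by
    by_cases h : ∃ a, v ∈ P a
    · exact ⟨h.choose, by simpa only [f, dif_pos h] using hvu⟩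
    · simp only [f, dif_neg h, reduceCtorEq] at hvu
  refine ⟨f, {v | ∃ a, v ∈ P a}, ⟨fun v u hvu ↦ ?_, fun v v' u h h' ↦ ?_, fun v u hvu ↦ ?_,
    fun v u hvu ↦ ?_, fun x hx ↦ ⟨⟨x, hx⟩, hself _⟩, fun v ⟨a, hv⟩ hnone ↦ ?_,
    fun x hx v hvx ↦ ?_, fun v ⟨a, hv⟩ ↦ ?_⟩⟩
  · obtain ⟨a, ha⟩ := hf' hvu
    exact (hP a).1.rel_of_nextAfter?_eq_some ha
  · obtain ⟨a, ha⟩ := hf' h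
    obtain ⟨b, hb⟩ := hf' h'
    obtain rfl := huniq (List.mem_of_nextAfter?_eq_some_right ha)
      (List.mem_of_nextAfter?_eq_some_right hb)
    exact List.eq_of_nextAfter?_eq_some (hP a).2.1 ha hb
  · obtain ⟨a, ha⟩ := hf' hvu
    exact ⟨a, List.mem_of_nextAfter?_eq_some ha⟩
  · obtain ⟨a, ha⟩ := hf' hvu
    exact ⟨a, List.mem_of_nextAfter?_eq_some_right ha⟩
  · obtain ⟨y, hy, hlast⟩ := (hP a).2.2.2
    rw [List.getLast?_eq_of_nextAfter?_eq_none hv ((hf hv).symm.trans hnone)] at hlast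
    exact Option.some_injective _ hlast ▸ hy
  · obtain ⟨a, ha⟩ := hf' hvx
    obtain rfl := huniq (List.mem_of_nextAfter?_eq_some_right ha) (hself ⟨x, hx⟩)
    exact List.head?_ne_of_nextAfter?_eq_some (hP _).2.1 ha (hhead _)
  · by_cases hva : (P a).head? = some v
    · exact Or.inl (Option.some_injective _ ((hhead a).symm.trans hva) ▸ a.2)
    · obtain ⟨u, hu⟩ := List.exists_nextAfter?_eq_some (hP a).2.1 hv hva
      exact Or.inr ⟨u, (hf (List.mem_of_nextAfter?_eq_some hu)).trans hu⟩

end LinkageMap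

section ExchangeWalk

open Relation

variable {V : Type*} {Adj : V → V → Prop} {B₀ : Set V} {X Y : Set V}
  {f h : V → Option V} {Sf Sh : Set V} {x : V}

/-- A step of the walk alternating between the linkages `f` of `X` and `h` of `Y`: on the `f`-paths
it moves forward along `f`, off them backward along `h`, and a forward step onto an `h`-path
continues at once backward along `h`. -/
def ExchStep (f h : V → Option V) (Sf Sh : Set V) (u v : V) : Prop :=
  (∃ w, f u = some w ∧ h v = some w) ∨ (f u = some v ∧ v ∉ Sh) ∨ (h v = some u ∧ u ∉ Sf)

open Classical in
/-- The walk from `x` starts as if it had just entered `x` along an `f`-edge. -/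
noncomputable def walkStart (h : V → Option V) (x : V) : V :=
  if hx : ∃ w, h w = some x then hx.choose else x

def exchWalk (f h : V → Option V) (Sf Sh : Set V) (x : V) : Set V :=
  {v | ReflTransGen (ExchStep f h Sf Sh) (walkStart h x) v}

theorem walkStart_spec (hh : IsLinkageMap Adj B₀ Y h Sh) (hxY : x ∉ Y) :
    h (walkStart h x) = some x ∨ (walkStart h x = x ∧ x ∉ Sh) := by
  by_cases hx : ∃ w, h w = some x
  · exact Or.inl (by rw [walkStart, dif_pos hx]; exact hx.choose_spec)
  · refine Or.inr ⟨by rw [walkStart, dif_neg hx], fun hxS ↦ ?_⟩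
    exact (hh.mem_or_exists hxS).elim hxY hx

theorem walkStart_mem_exchWalk : walkStart h x ∈ exchWalk f h Sf Sh x := ReflTransGen.refl

theorem ExchStep.rightUnique (hf : IsLinkageMap Adj B₀ X f Sf) (hh : IsLinkageMap Adj B₀ Y h Sh) :
    Relator.RightUnique (ExchStep f h Sf Sh) := by
  intro u v v' h₁ h₂
  have := hf.mem_left; have := hh.mem_right; have := hh.inj
  rcases h₁ with ⟨w, hfu, hhv⟩ | ⟨hfu, hv⟩ | ⟨hhv, hu⟩ <;>
    rcases h₂ with ⟨w', hfu', hhv'⟩ | ⟨hfu', hv'⟩ | ⟨hhv', hu'⟩ <;> grind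

theorem ExchStep.leftUnique (hf : IsLinkageMap Adj B₀ X f Sf) (hh : IsLinkageMap Adj B₀ Y h Sh) :
    Relator.LeftUnique (ExchStep f h Sf Sh) := by
  intro u u' v h₁ h₂
  have := hf.mem_right; have := hh.mem_left; have := hf.inj
  rcases h₁ with ⟨w, hfu, hhv⟩ | ⟨hfu, hv⟩ | ⟨hhv, hu⟩ <;>
    rcases h₂ with ⟨w', hfu', hhv'⟩ | ⟨hfu', hv'⟩ | ⟨hhv', hu'⟩ <;> grind

theorem not_exchStep_walkStart (hf : IsLinkageMap Adj B₀ X f Sf)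
    (hh : IsLinkageMap Adj B₀ Y h Sh) (hx : x ∈ X) (hxY : x ∉ Y) (u : V) :
    ¬ ExchStep f h Sf Sh u (walkStart h x) := by
  have := hf.ne_some hx u; have := hf.subset hx; have := hh.mem_left
  rcases walkStart_spec hh hxY with hs | ⟨hs, hxS⟩ <;> unfold ExchStep <;> grind

theorem eq_walkStart_of_forall_not_exchStep {v : V} (hv : v ∈ exchWalk f h Sf Sh x)
    (hin : ∀ u, ¬ ExchStep f h Sf Sh u v) : v = walkStart h x := by
  rcases hv.cases_tail with hv | ⟨u, -, hu⟩
  · exact hv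
  · exact absurd hu (hin u)

theorem mem_exchWalk_of_exchStep (hf : IsLinkageMap Adj B₀ X f Sf)
    (hh : IsLinkageMap Adj B₀ Y h Sh) (hx : x ∈ X) (hxY : x ∉ Y) {u v : V}
    (hv : v ∈ exchWalk f h Sf Sh x) (huv : ExchStep f h Sf Sh u v) : u ∈ exchWalk f h Sf Sh x := by
  rcases hv.cases_tail with rfl | ⟨c, hc, hcv⟩
  · exact absurd huv (not_exchStep_walkStart hf hh hx hxY u)
  · rwa [ExchStep.leftUnique hf hh huv hcv]

def IsWalkEnd (f h : V → Option V) (Sf Sh : Set V) (x w : V) : Prop :=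
  w ∈ exchWalk f h Sf Sh x ∧ ∀ u, ¬ ExchStep f h Sf Sh w u

theorem exists_isWalkEnd [Finite V] (hf : IsLinkageMap Adj B₀ X f Sf)
    (hh : IsLinkageMap Adj B₀ Y h Sh) (hx : x ∈ X) (hxY : x ∉ Y) :
    ∃ w, IsWalkEnd f h Sf Sh x w :=
  ReflTransGen.exists_forall_not_rel (ExchStep.leftUnique hf hh)
    (not_exchStep_walkStart hf hh hx hxY)

theorem IsWalkEnd.unique (hf : IsLinkageMap Adj B₀ X f Sf) (hh : IsLinkageMap Adj B₀ Y h Sh)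
    {w₁ w₂ : V} (h₁ : IsWalkEnd f h Sf Sh x w₁) (h₂ : IsWalkEnd f h Sf Sh x w₂) : w₁ = w₂ := by
  rcases ReflTransGen.total_of_right_unique (ExchStep.rightUnique hf hh) h₁.1 h₂.1 with h | h
  · rcases h.cases_head with rfl | ⟨u, hu, -⟩
    · rfl
    · exact absurd hu (h₁.2 u)
  · rcases h.cases_head with rfl | ⟨u, hu, -⟩
    · rfl
    · exact absurd hu (h₂.2 u)

theorem IsWalkEnd.eq_of_some_mem (hf : IsLinkageMap Adj B₀ X f Sf)
    (hh : IsLinkageMap Adj B₀ Y h Sh) {w v z : V} (hw : IsWalkEnd f h Sf Sh x w)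
    (hv : v ∈ exchWalk f h Sf Sh x) (hvz : f v = some z) (hz : z ∈ Y) : v = w := by
  refine IsWalkEnd.unique hf hh ⟨hv, fun u hu ↦ ?_⟩ hw
  have := hh.ne_some hz u; have := hh.subset hz; have := hf.mem_left
  unfold ExchStep at hu; grind

theorem IsWalkEnd.eq_of_mem_not_mem (hf : IsLinkageMap Adj B₀ X f Sf)
    (hh : IsLinkageMap Adj B₀ Y h Sh) {w z : V} (hw : IsWalkEnd f h Sf Sh x w)
    (hz : z ∈ exchWalk f h Sf Sh x) (hzY : z ∈ Y) (hzS : z ∉ Sf) : z = w := by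
  refine IsWalkEnd.unique hf hh ⟨hz, fun u hu ↦ ?_⟩ hw
  have := hh.ne_some hzY u; have := hf.mem_left
  unfold ExchStep at hu; grind

theorem mem_or_mem_of_mem_exchWalk (hf : IsLinkageMap Adj B₀ X f Sf)
    (hh : IsLinkageMap Adj B₀ Y h Sh) (hx : x ∈ X) (hxY : x ∉ Y) {v : V}
    (hv : v ∈ exchWalk f h Sf Sh x) : v ∈ Sf ∨ v ∈ Sh := by
  induction hv with
  | refl =>
    rcases walkStart_spec hh hxY with hs | ⟨hs, -⟩
    · exact Or.inr (hh.mem_left hs)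
    · rw [hs]
      exact Or.inl (hf.subset hx)
  | tail _ hstep _ =>
    rcases hstep with ⟨w, -, hhv⟩ | ⟨hfb, -⟩ | ⟨hhv, -⟩
    · exact Or.inr (hh.mem_left hhv)
    · exact Or.inl (hf.mem_right hfb)
    · exact Or.inr (hh.mem_left hhv)

theorem IsWalkEnd.cases (hf : IsLinkageMap Adj B₀ X f Sf) (hh : IsLinkageMap Adj B₀ Y h Sh)
    (hx : x ∈ X) (hxY : x ∉ Y) {w : V} (hw : IsWalkEnd f h Sf Sh x w) :
    (∃ y ∈ Y, f w = some y) ∨ (w ∈ Y ∧ w ∉ Sf) ∨ (f w = none ∧ w ∈ Sf) := by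
  cases hfw : f w with
  | some y =>
    refine Or.inl ⟨y, ?_, rfl⟩
    have hyS : y ∈ Sh := by_contra fun hyS ↦ hw.2 y (Or.inr (Or.inl ⟨hfw, hyS⟩))
    exact (hh.mem_or_exists hyS).resolve_right fun ⟨v, hv⟩ ↦ hw.2 v (Or.inl ⟨y, hfw, hv⟩)
  | none =>
    by_cases hwS : w ∈ Sf
    · exact Or.inr (Or.inr ⟨rfl, hwS⟩)
    · have hwS' := (mem_or_mem_of_mem_exchWalk hf hh hx hxY hw.1).resolve_left hwS
      refine Or.inr (Or.inl ⟨(hh.mem_or_exists hwS').resolve_right fun ⟨v, hv⟩ ↦ ?_, hwS⟩)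
      exact hw.2 v (Or.inr (Or.inr ⟨hv, hwS⟩))

theorem linked_of_exchWalk [Finite V] (hf : IsLinkageMap Adj B₀ X f Sf)
    (hh : IsLinkageMap Adj B₀ Y h Sh) (hx : x ∈ X) (hxY : x ∉ Y) {w : V}
    (hw : IsWalkEnd f h Sf Sh x w) {T : Set V} (hxT : x ∈ T)
    (hT : ∀ z ∈ T, z ≠ x → z ∈ Y ∧ f w ≠ some z ∧ (z = w → w ∈ Sf)) :
    Linked Adj B₀ T := by
  classical
  set M := exchWalk f h Sf Sh x
  have hM : ∀ {u v}, u ∈ M → ExchStep f h Sf Sh u v → v ∈ M := fun hu huv ↦ ReflTransGen.tail hu huv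
  have hg : ∀ v, M.piecewise f h v = if v ∈ M then f v else h v := fun _ ↦ rfl
  refine linked_of_succ (M.piecewise f h) (W := {v | (v ∈ M → v ∈ Sf) ∧ (v ∉ M → v ∈ Sh)})
    (fun v u hvu ↦ ?_) (fun v v' u hv hv' ↦ ?_) (fun v u hv hvu ↦ ?_) (fun v hv hvu ↦ ?_)
    (fun z hz ↦ ?_) (fun z hz v hvz ↦ ?_)
  · rw [hg] at hvu
    split_ifs at hvu
    · exact hf.adj hvu
    · exact hh.adj hvu
  · rw [hg] at hv hv'
    split_ifs at hv hv' with h₁ h₂ h₂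
    · exact hf.inj hv hv'
    · exact absurd (hM h₁ (Or.inl ⟨u, hv, hv'⟩)) h₂
    · exact absurd (hM h₂ (Or.inl ⟨u, hv', hv⟩)) h₁
    · exact hh.inj hv hv'
  · rw [hg] at hvu
    split_ifs at hvu with hvM
    · exact ⟨fun _ ↦ hf.mem_right hvu,
        fun huM ↦ by_contra fun huS ↦ huM (hM hvM (Or.inr (Or.inl ⟨hvu, huS⟩)))⟩
    · exact ⟨fun huM ↦ by_contra fun huS ↦ hvM (hM huM (Or.inr (Or.inr ⟨hvu, huS⟩))),
        fun _ ↦ hh.mem_right hvu⟩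
  · rw [hg] at hvu
    split_ifs at hvu with hvM
    · exact hf.mem_of_eq_none (hv.1 hvM) hvu
    · exact hh.mem_of_eq_none (hv.2 hvM) hvu
  · by_cases hzx : z = x
    · subst hzx
      refine ⟨fun _ ↦ hf.subset hx, fun hxM ↦ ?_⟩
      rcases walkStart_spec hh hxY with hs | ⟨hs, -⟩
      · exact hh.mem_right hs
      · exact absurd (hs ▸ walkStart_mem_exchWalk) hxM
    · obtain ⟨hzY, -, hzw⟩ := hT z hz hzx
      refine ⟨fun hzM ↦ by_contra fun hzS ↦ hzS ?_, fun _ ↦ hh.subset hzY⟩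
      exact hw.eq_of_mem_not_mem hf hh hzM hzY hzS ▸ hzw (hw.eq_of_mem_not_mem hf hh hzM hzY hzS)
  · rw [hg] at hvz
    by_cases hzx : z = x
    · subst hzx
      split_ifs at hvz with hvM
      · exact hf.ne_some hx v hvz
      · rcases walkStart_spec hh hxY with hs | ⟨-, hxS⟩
        · exact hvM (hh.inj hvz hs ▸ walkStart_mem_exchWalk)
        · exact hxS (hh.mem_right hvz)
    · obtain ⟨hzY, hfz, -⟩ := hT z hz hzx
      split_ifs at hvz with hvM
      · exact hfz (hw.eq_of_some_mem hf hh hvM hvz hzY ▸ hvz)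
      · exact hh.ne_some hzY v hvz

theorem mem_of_mem_exchWalk (hf : IsLinkageMap Adj B₀ X f Sf)
    (hh : IsLinkageMap Adj B₀ Y h Sh) (hxY : x ∉ Y) {z : V} (hz : z ∈ X) (hzx : z ≠ x)
    (hzM : z ∈ exchWalk f h Sf Sh x) : z ∈ Sh := by
  by_contra hzS
  have hin : ∀ u, ¬ ExchStep f h Sf Sh u z := fun u hu ↦ by
    have := hf.ne_some hz u; have := hh.mem_left
    unfold ExchStep at hu; grind
  have hzs := eq_walkStart_of_forall_not_exchStep hzM hin
  rcases walkStart_spec hh hxY with hs | ⟨hs, -⟩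
  · exact hzS (hzs ▸ hh.mem_left hs)
  · exact hzx (hzs.trans hs)

theorem ne_some_of_mem_exchWalk (hf : IsLinkageMap Adj B₀ X f Sf)
    (hh : IsLinkageMap Adj B₀ Y h Sh) (hxY : x ∉ Y) {z v : V} (hz : z ∈ X) (hzx : z ≠ x)
    (hv : v ∈ exchWalk f h Sf Sh x) : h v ≠ some z := by
  intro hvz
  have hin : ∀ u, ¬ ExchStep f h Sf Sh u v := fun u hu ↦ by
    have := hf.ne_some hz u; have := hh.mem_left; have := hf.subset hz
    unfold ExchStep at hu; grind
  have hvs := eq_walkStart_of_forall_not_exchStep hv hin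
  rcases walkStart_spec hh hxY with hs | ⟨hs, hxS⟩
  · exact hzx (Option.some_injective _ (hvz.symm.trans (hvs ▸ hs)))
  · exact hxS (hs ▸ hvs ▸ hh.mem_left hvz)

theorem linked_insert_diff_of_exchWalk [Finite V] (hf : IsLinkageMap Adj B₀ X f Sf)
    (hh : IsLinkageMap Adj B₀ Y h Sh) (hx : x ∈ X) (hxY : x ∉ Y) {y : V} (hyY : y ∈ Y)
    (hy : (∃ v ∈ exchWalk f h Sf Sh x, f v = some y) ∨ (y ∈ exchWalk f h Sf Sh x ∧ y ∉ Sf)) :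
    Linked Adj B₀ (insert y (X \ {x})) := by
  classical
  set M := exchWalk f h Sf Sh x
  have hM : ∀ {u v}, v ∈ M → ExchStep f h Sf Sh u v → u ∈ M :=
    mem_exchWalk_of_exchStep hf hh hx hxY
  have hg : ∀ v, M.piecewise h f v = if v ∈ M then h v else f v := fun _ ↦ rfl
  refine linked_of_succ (M.piecewise h f) (W := {v | (v ∈ M → v ∈ Sh) ∧ (v ∉ M → v ∈ Sf)})
    (fun v u hvu ↦ ?_) (fun v v' u hv hv' ↦ ?_) (fun v u hv hvu ↦ ?_) (fun v hv hvu ↦ ?_)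
    (fun z hz ↦ ?_) (fun z hz v hvz ↦ ?_)
  · rw [hg] at hvu
    split_ifs at hvu
    · exact hh.adj hvu
    · exact hf.adj hvu
  · rw [hg] at hv hv'
    split_ifs at hv hv' with h₁ h₂ h₂
    · exact hh.inj hv hv'
    · exact absurd (hM h₁ (Or.inl ⟨u, hv', hv⟩)) h₂
    · exact absurd (hM h₂ (Or.inl ⟨u, hv, hv'⟩)) h₁
    · exact hf.inj hv hv'
  · rw [hg] at hvu
    split_ifs at hvu with hvM
    · exact ⟨fun _ ↦ hh.mem_right hvu,
        fun huM ↦ by_contra fun huS ↦ huM (hM hvM (Or.inr (Or.inr ⟨hvu, huS⟩)))⟩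
    · exact ⟨fun huM ↦ by_contra fun huS ↦ hvM (hM huM (Or.inr (Or.inl ⟨hvu, huS⟩))),
        fun _ ↦ hf.mem_right hvu⟩
  · rw [hg] at hvu
    split_ifs at hvu with hvM
    · exact hh.mem_of_eq_none (hv.1 hvM) hvu
    · exact hf.mem_of_eq_none (hv.2 hvM) hvu
  · rcases hz with rfl | ⟨hzX, hzx⟩
    · refine ⟨fun _ ↦ hh.subset hyY, fun hzM ↦ ?_⟩
      rcases hy with ⟨v, -, hv⟩ | ⟨hyM, -⟩
      · exact hf.mem_right hv
      · exact absurd hyM hzM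
    · exact ⟨mem_of_mem_exchWalk hf hh hxY hzX hzx, fun _ ↦ hf.subset hzX⟩
  · rw [hg] at hvz
    rcases hz with rfl | ⟨hzX, hzx⟩
    · split_ifs at hvz with hvM
      · exact hh.ne_some hyY v hvz
      · rcases hy with ⟨v', hv'M, hv'⟩ | ⟨-, hyS⟩
        · exact hvM (hf.inj hvz hv' ▸ hv'M)
        · exact hyS (hf.mem_right hvz)
    · split_ifs at hvz with hvM
      · exact ne_some_of_mem_exchWalk hf hh hxY hzX hzx hvM hvz
      · exact hf.ne_some hzX v hvz

def IsExchPartner (f h : V → Option V) (Sf Sh : Set V) (x y : V) : Prop :=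
  ∃ w ∈ exchWalk f h Sf Sh x, f w = some y ∨ (w = y ∧ y ∉ Sf)

theorem linked_insert_or_exists_exchange [Finite V] (hf : IsLinkageMap Adj B₀ X f Sf)
    (hh : IsLinkageMap Adj B₀ Y h Sh) (hx : x ∈ X) (hxY : x ∉ Y) :
    Linked Adj B₀ (insert x Y) ∨ ∃ y ∈ Y, y ∉ X ∧ IsExchPartner f h Sf Sh x y ∧
      Linked Adj B₀ (insert x (Y \ {y})) ∧ Linked Adj B₀ (insert y (X \ {x})) := by
  obtain ⟨w, hw⟩ := exists_isWalkEnd hf hh hx hxY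
  rcases hw.cases hf hh hx hxY with ⟨y, hyY, hfw⟩ | ⟨hwY, hwS⟩ | ⟨hfw, hwS⟩
  · refine Or.inr ⟨y, hyY, fun hyX ↦ hf.ne_some hyX w hfw, ⟨w, hw.1, Or.inl hfw⟩, ?_,
      linked_insert_diff_of_exchWalk hf hh hx hxY hyY (Or.inl ⟨w, hw.1, hfw⟩)⟩
    refine linked_of_exchWalk hf hh hx hxY hw (Set.mem_insert x _) fun z hz hzx ↦ ?_
    obtain ⟨hzY, hzy⟩ := (Set.mem_insert_iff.1 hz).resolve_left hzx
    exact ⟨hzY, fun h ↦ hzy (Option.some_injective _ (hfw.symm.trans h)).symm,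
      fun _ ↦ hf.mem_left hfw⟩
  · refine Or.inr ⟨w, hwY, fun hwX ↦ hwS (hf.subset hwX), ⟨w, hw.1, Or.inr ⟨rfl, hwS⟩⟩, ?_,
      linked_insert_diff_of_exchWalk hf hh hx hxY hwY (Or.inr ⟨hw.1, hwS⟩)⟩
    refine linked_of_exchWalk hf hh hx hxY hw (Set.mem_insert x _) fun z hz hzx ↦ ?_
    obtain ⟨hzY, hzw⟩ := (Set.mem_insert_iff.1 hz).resolve_left hzx
    exact ⟨hzY, fun h ↦ hwS (hf.mem_left h), fun h ↦ absurd h hzw⟩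
  · refine Or.inl (linked_of_exchWalk hf hh hx hxY hw (Set.mem_insert x _) fun z hz hzx ↦ ?_)
    exact ⟨(Set.mem_insert_iff.1 hz).resolve_left hzx, by simp [hfw], fun _ ↦ hwS⟩

theorem eq_of_walkStart_eq (hh : IsLinkageMap Adj B₀ Y h Sh) {x₁ x₂ : V} (hx₁ : x₁ ∉ Y)
    (hx₂ : x₂ ∉ Y) (hs : walkStart h x₁ = walkStart h x₂) : x₁ = x₂ := by
  rcases walkStart_spec hh hx₁ with h₁ | ⟨h₁, hS₁⟩ <;>
    rcases walkStart_spec hh hx₂ with h₂ | ⟨h₂, hS₂⟩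
  · exact Option.some_injective _ ((hs ▸ h₁).symm.trans h₂)
  · exact absurd (h₂ ▸ hs ▸ hh.mem_left h₁) hS₂
  · exact absurd (h₁ ▸ hs.symm ▸ hh.mem_left h₂) hS₁
  · exact h₁.symm.trans (hs.trans h₂)

theorem IsExchPartner.inj (hf : IsLinkageMap Adj B₀ X f Sf) (hh : IsLinkageMap Adj B₀ Y h Sh)
    {x₁ x₂ y : V} (hx₁ : x₁ ∈ X) (hx₁Y : x₁ ∉ Y) (hx₂ : x₂ ∈ X) (hx₂Y : x₂ ∉ Y)
    (h₁ : IsExchPartner f h Sf Sh x₁ y) (h₂ : IsExchPartner f h Sf Sh x₂ y) : x₁ = x₂ := by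
  obtain ⟨w₁, hw₁, hy₁⟩ := h₁
  obtain ⟨w₂, hw₂, hy₂⟩ := h₂
  obtain rfl : w₁ = w₂ := by
    rcases hy₁ with hy₁ | ⟨rfl, hS₁⟩ <;> rcases hy₂ with hy₂ | ⟨rfl, hS₂⟩
    · exact hf.inj hy₁ hy₂
    · exact absurd (hf.mem_right hy₁) hS₂
    · exact absurd (hf.mem_right hy₂) hS₁
    · rfl
  exact eq_of_walkStart_eq hh hx₁Y hx₂Y (ReflTransGen.eq_of_left_unique (ExchStep.leftUnique hf hh)
    (not_exchStep_walkStart hf hh hx₁ hx₁Y) (not_exchStep_walkStart hf hh hx₂ hx₂Y) hw₁ hw₂)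

end ExchangeWalk

theorem Linked.exists_injOn_exchange {V : Type*} [Finite V] [DecidableEq V]
    {Adj : V → V → Prop} {B₀ : Set V} {X Y : Finset V} (hX : Linked Adj B₀ ↑X)
    (hY : Linked Adj B₀ ↑Y) (hmax : ∀ x ∈ X \ Y, ¬ Linked Adj B₀ ↑(insert x Y)) :
    ∃ σ : V → V, Set.InjOn σ ↑(X \ Y) ∧ ∀ x ∈ X \ Y, σ x ∈ Y \ X ∧
      Linked Adj B₀ ↑(insert (σ x) (X.erase x)) ∧ Linked Adj B₀ ↑(insert x (Y.erase (σ x))) := by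
  obtain ⟨f, Sf, hf⟩ := hX.exists_isLinkageMap
  obtain ⟨h, Sh, hh⟩ := hY.exists_isLinkageMap
  have hexch : ∀ x ∈ X \ Y, ∃ y, (y ∈ Y \ X ∧ IsExchPartner f h Sf Sh x y) ∧
      Linked Adj B₀ ↑(insert y (X.erase x)) ∧ Linked Adj B₀ ↑(insert x (Y.erase y)) := by
    intro x hx
    obtain ⟨hxX, hxY⟩ := Finset.mem_sdiff.1 hx
    rcases linked_insert_or_exists_exchange hf hh hxX hxY with hL | ⟨y, hyY, hyX, hxy, hL₁, hL₂⟩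
    · exact absurd (by simpa using hL) (hmax x hx)
    · exact ⟨y, ⟨Finset.mem_sdiff.2 ⟨hyY, hyX⟩, hxy⟩, by simpa using hL₂, by simpa using hL₁⟩
  choose! σ hσ hL using hexch
  refine ⟨σ, fun x₁ hx₁ x₂ hx₂ h₁₂ ↦ ?_, fun x hx ↦ ⟨(hσ x hx).1, hL x hx⟩⟩
  have hx₁' := Finset.mem_sdiff.1 (Finset.mem_coe.1 hx₁)
  have hx₂' := Finset.mem_sdiff.1 (Finset.mem_coe.1 hx₂)
  exact IsExchPartner.inj hf hh hx₁'.1 hx₁'.2 hx₂'.1 hx₂'.2 (hσ x₁ hx₁).2 (h₁₂ ▸ (hσ x₂ hx₂).2)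

/-- Every gammoid (the restriction of a strict gammoid `L(G, B₀)` to a subset `E₀`
of the vertices; its bases are the maximal independent sets) is base-orderable. -/
theorem stmt8 {V : Type*} [Fintype V] [DecidableEq V] (Adj : V → V → Prop)
    (B₀ E₀ : Finset V) :
    BaseOrderable (fun B : Finset V =>
      (B ⊆ E₀ ∧ Linked Adj ↑B₀ ↑B) ∧
      ∀ B' : Finset V, (B' ⊆ E₀ ∧ Linked Adj ↑B₀ ↑B') → B ⊆ B' → B = B') := by
  set Ind : Finset V → Prop := fun B ↦ B ⊆ E₀ ∧ Linked Adj ↑B₀ ↑B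
  have hbase : (fun B ↦ Ind B ∧ ∀ B', Ind B' → B ⊆ B' → B = B') = Maximal Ind := by
    funext B
    simp only [maximal_iff]
  rw [hbase]
  refine baseOrderable_maximal_of_injOn_sdiff fun X Y hX hY ↦ ?_
  have hmax : ∀ x ∈ X \ Y, ¬ Linked Adj ↑B₀ ↑(insert x Y) := fun x hx hL ↦ by
    obtain ⟨hxX, hxY⟩ := Finset.mem_sdiff.1 hx
    exact hxY (hY.2 ⟨Finset.insert_subset (hX.1.1 hxX) hY.1.1, hL⟩ (Finset.subset_insert x Y)
      (Finset.mem_insert_self x Y))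
  obtain ⟨σ, hinj, hσ⟩ := hX.1.2.exists_injOn_exchange hY.1.2 hmax
  refine ⟨σ, hinj, fun x hx ↦ ⟨(hσ x hx).1, ⟨?_, (hσ x hx).2.1⟩, ⟨?_, (hσ x hx).2.2⟩⟩⟩
  · exact Finset.insert_subset (hY.1.1 (Finset.mem_sdiff.1 (hσ x hx).1).1)
      ((Finset.erase_subset _ _).trans hX.1.1)
  · exact Finset.insert_subset (hX.1.1 (Finset.mem_sdiff.1 hx).1)
      ((Finset.erase_subset _ _).trans hY.1.1)
end
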